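/- Let M be a matroid on a linearly ordered finite set E with rank function r. Then T(M; 1+x, y) = Σ_I x^{r(M)−r(I)} y^{|ex(I)|}, where the sum is over all independent sets I of M and ex(I) is the set of externally active elements of I. -/

import Mathlib

open Finset
open scoped Classical

noncomputable section

variable {β : Type*} [Fintype β]

/-- The (ℕ-valued) rank of a set in a matroid: the maximal size of an independent
subset. -/
def mrank (M : Matroid β) (S : Finset β) : ℕ :=
  sSup {c | ∃ I : Finset β, I ⊆ S ∧ M.Indep ↑I ∧ I.card = c}

/-- `C` is a circuit of `M`: a minimal dependent set. -/
def MIsCircuit {α : Type*} (M : Matroid α) (C : Set α) : Prop :=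
  M.Dep C ∧ ∀ e ∈ C, M.Indep (C \ {e})

/-- `ex(I)`: the externally active elements of `I`, i.e. the elements `e` that are
smallest in some circuit contained in `I ∪ {e}`. -/
def mexSet {α : Type*} [LinearOrder α] (M : Matroid α) (I : Set α) : Set α :=
  {e | ∃ C, MIsCircuit M C ∧ C ⊆ insert e I ∧ e ∈ C ∧ ∀ f ∈ C, e ≤ f}

/-- `in(B)`: the internally active elements of the basis `B`, i.e. the elements
`e ∈ B` that are smallest in some cocircuit contained in `E − (B − e)`. -/
def minSet {α : Type*} [LinearOrder α] (M : Matroid α) (B : Set α) : Set α :=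
  {e | e ∈ B ∧ ∃ D, MIsCircuit M✶ D ∧ D ⊆ (M.E \ B) ∪ {e} ∧ e ∈ D ∧ ∀ f ∈ D, e ≤ f}

/-- Corank-nullity Tutte polynomial evaluation. -/
def tutteEval {α : Type*} [Fintype α] [DecidableEq α] {R : Type*} [CommRing R]
    (r : Finset α → ℕ) (x y : R) : R :=
  ∑ S : Finset α, (x - 1) ^ (r Finset.univ - r S) * (y - 1) ^ (S.card - r S)

end

lemma sum_pow_powerset {α : Type*} [DecidableEq α] {R : Type*} [CommRing R]
    (T : Finset α) (z : R) :
    ∑ A ∈ T.powerset, z ^ A.card = (z + 1) ^ T.card := by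
  have h := Finset.prod_add (fun _ : α => z) (fun _ : α => 1) T
  simp only [Finset.prod_const, Finset.prod_const_one, one_pow, mul_one] at h
  exact h.symm

section Aux

variable {α : Type*} [Fintype α] [LinearOrder α] (M : Matroid α) (hE : M.E = Set.univ)
include hE

lemma mdep_iff {X : Set α} : M.Dep X ↔ ¬ M.Indep X := by
  rw [Matroid.Dep, hE]
  simp

lemma exists_mcircuit : ∀ D : Finset α, ¬ M.Indep ↑D →
    ∃ C : Finset α, C ⊆ D ∧ MIsCircuit M ↑C := by
  intro D
  induction D using Finset.strongInduction with
  | _ D ih =>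
    intro hD
    by_cases h : ∀ e ∈ D, M.Indep ((↑D : Set α) \ {e})
    · refine ⟨D, Finset.Subset.rfl, (mdep_iff M hE).2 hD, ?_⟩
      intro e he
      exact h e (by exact_mod_cast he)
    · push_neg at h
      obtain ⟨e, he, hdep⟩ := h
      obtain ⟨C, hsub, hC⟩ := ih (D.erase e) (Finset.erase_ssubset he)
        (by rw [Finset.coe_erase]; exact hdep)
      exact ⟨C, hsub.trans (Finset.erase_subset _ _), hC⟩

lemma fund_mcircuit {I : Finset α} {e : α} (hI : M.Indep ↑I)
    (h : ¬ M.Indep (insert e ↑I)) :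
    ∃ C : Finset α, MIsCircuit M ↑C ∧ (↑C : Set α) ⊆ insert e ↑I ∧ e ∈ C := by
  have h' : ¬ M.Indep ↑(insert e I) := by rwa [Finset.coe_insert]
  obtain ⟨C, hsub, hC⟩ := exists_mcircuit M hE _ h'
  refine ⟨C, hC, ?_, ?_⟩
  · rw [← Finset.coe_insert]
    exact Finset.coe_subset.2 hsub
  · by_contra heC
    have hCI : C ⊆ I := by
      intro f hf
      rcases Finset.mem_insert.1 (hsub hf) with h1 | h1
      · exact absurd (h1 ▸ hf) heC
      · exact h1
    exact ((mdep_iff M hE).1 hC.1) (hI.subset (Finset.coe_subset.2 hCI))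

lemma not_mem_of_mexSet {I : Set α} {e : α} (hI : M.Indep I) (he : e ∈ mexSet M I) :
    e ∉ I := by
  intro heI
  obtain ⟨C, hC, hsub, -, -⟩ := he
  rw [Set.insert_eq_of_mem heI] at hsub
  exact (mdep_iff M hE).1 hC.1 (hI.subset hsub)

/-- `I` is the "greedy" (largest-first) basis of `S`: an independent subset such that
every element of `S \ I` is externally active for `I`. -/
def MGood (I S : Finset α) : Prop :=
  I ⊆ S ∧ M.Indep ↑I ∧ ∀ e ∈ S, e ∉ I → e ∈ mexSet M ↑I

lemma mgood_basis {I S : Finset α} (h : MGood M I S) : M.IsBasis ↑I ↑S := by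
  refine h.2.1.isBasis_of_forall_insert (Finset.coe_subset.2 h.1) ?_
  rintro e ⟨heS, heI⟩
  obtain ⟨C, hC, hsub, heC, -⟩ := h.2.2 e (by exact_mod_cast heS) (by exact_mod_cast heI)
  exact hC.1.superset hsub (by rw [hE]; exact Set.subset_univ _)

lemma mgood_exists : ∀ S : Finset α, ∃ I, MGood M I S := by
  intro S
  induction S using Finset.strongInduction with
  | _ S ih =>
    rcases S.eq_empty_or_nonempty with rfl | hne
    · exact ⟨∅, Finset.Subset.rfl, by simpa using M.empty_indep, by simp⟩
    · obtain ⟨I', hI'⟩ := ih (S.erase (S.min' hne)) (Finset.erase_ssubset (S.min'_mem hne))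
      have hI'S : I' ⊆ S := hI'.1.trans (Finset.erase_subset _ _)
      by_cases hins : M.Indep (insert (S.min' hne) (↑I' : Set α))
      · refine ⟨insert (S.min' hne) I', ?_, by rwa [Finset.coe_insert], ?_⟩
        · exact Finset.insert_subset (S.min'_mem hne) hI'S
        · intro f hf hfI
          have hfe : f ≠ S.min' hne := fun h => hfI (h ▸ Finset.mem_insert_self _ _)
          obtain ⟨C, hC, hsub, hfC, hmin⟩ := hI'.2.2 f (Finset.mem_erase.2 ⟨hfe, hf⟩)
            (fun h => hfI (Finset.mem_insert_of_mem h))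
          refine ⟨C, hC, hsub.trans (Set.insert_subset_insert ?_), hfC, hmin⟩
          rw [Finset.coe_insert]
          exact Set.subset_insert _ _
      · refine ⟨I', hI'S, hI'.2.1, ?_⟩
        intro f hf hfI
        by_cases hfe : f = S.min' hne
        · subst hfe
          obtain ⟨C, hC, hsub, hfC⟩ := fund_mcircuit M hE hI'.2.1 hins
          refine ⟨↑C, hC, hsub, by exact_mod_cast hfC, ?_⟩
          intro g hg
          have hgS : g ∈ (↑S : Set α) := by
            have : (insert (S.min' hne) (↑I' : Set α)) ⊆ ↑S :=
              Set.insert_subset (by exact_mod_cast S.min'_mem hne)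
                (Finset.coe_subset.2 hI'S)
            exact this (hsub hg)
          exact S.min'_le g (by exact_mod_cast hgS)
        · exact hI'.2.2 f (Finset.mem_erase.2 ⟨hfe, hf⟩) hfI

lemma mgood_unique_aux {I I' S : Finset α} (h : MGood M I S) (h' : MGood M I' S) {e : α}
    (heI' : e ∈ I') (heI : e ∉ I) (hagree : ∀ f, e < f → (f ∈ I ↔ f ∈ I')) : False := by
  obtain ⟨C, hC, hsub, heC, hmin⟩ := h.2.2 e (h'.1 heI') heI
  have hCI' : C ⊆ ↑I' := by
    intro f hf
    rcases Set.mem_insert_iff.1 (hsub hf) with rfl | hfI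
    · exact_mod_cast heI'
    · have hfe : e < f := lt_of_le_of_ne (hmin f hf)
        (fun hh => heI (by exact_mod_cast hh ▸ hfI))
      exact_mod_cast (hagree f hfe).1 (by exact_mod_cast hfI)
  exact (mdep_iff M hE).1 hC.1 (h'.2.1.subset hCI')

lemma mgood_unique {I I' S : Finset α} (h : MGood M I S) (h' : MGood M I' S) : I = I' := by
  by_contra hne
  have hDne : ((I \ I') ∪ (I' \ I)).Nonempty := by
    rw [Finset.nonempty_iff_ne_empty]
    intro h0
    rw [Finset.union_eq_empty, Finset.sdiff_eq_empty_iff_subset,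
      Finset.sdiff_eq_empty_iff_subset] at h0
    exact hne (Finset.Subset.antisymm h0.1 h0.2)
  set D := (I \ I') ∪ (I' \ I) with hD
  have hagree : ∀ f, D.max' hDne < f → (f ∈ I ↔ f ∈ I') := by
    intro f hf
    by_contra hiff
    have hfD : f ∈ D := by
      simp only [hD, Finset.mem_union, Finset.mem_sdiff]
      tauto
    exact absurd (D.le_max' f hfD) (not_le.2 hf)
  have heD := D.max'_mem hDne
  simp only [hD, Finset.mem_union, Finset.mem_sdiff] at heD
  rcases heD with ⟨h1, h2⟩ | ⟨h1, h2⟩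
  · exact mgood_unique_aux M hE h' h h1 h2 (fun f hf => (hagree f hf).symm)
  · exact mgood_unique_aux M hE h h' h1 h2 hagree

lemma mrank_basis {I S : Finset α} (h : M.IsBasis ↑I ↑S) : mrank M S = I.card := by
  have hub : ∀ c ∈ {c | ∃ J : Finset α, J ⊆ S ∧ M.Indep ↑J ∧ J.card = c}, c ≤ I.card := by
    rintro c ⟨J, hJS, hJ, rfl⟩
    obtain ⟨J', hJ', hJJ'⟩ := hJ.subset_isBasis_of_subset (Finset.coe_subset.2 hJS)
      (by rw [hE]; exact Set.subset_univ _)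
    have h1 : (↑J : Set α).encard ≤ J'.encard := Set.encard_mono hJJ'
    rw [hJ'.encard_eq_encard h, Set.encard_coe_eq_coe_finsetCard,
      Set.encard_coe_eq_coe_finsetCard] at h1
    exact_mod_cast h1
  have hmem : I.card ∈ {c | ∃ J : Finset α, J ⊆ S ∧ M.Indep ↑J ∧ J.card = c} :=
    ⟨I, Finset.coe_subset.1 h.subset, h.indep, rfl⟩
  exact le_antisymm (csSup_le ⟨I.card, hmem⟩ hub) (le_csSup ⟨I.card, hub⟩ hmem)

lemma mrank_indep {I : Finset α} (hI : M.Indep ↑I) : mrank M I = I.card :=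
  mrank_basis M hE hI.isBasis_self

end Aux

/-- `T(M; 1+x, y) = ∑_I x^{r(M)−r(I)} y^{|ex(I)|}`, the sum over all
independent sets `I` of `M`. -/
theorem statement17 {α : Type*} [Fintype α] [LinearOrder α]
    (M : Matroid α) (hE : M.E = Set.univ) :
    tutteEval (mrank M) (1 + MvPolynomial.X 0 : MvPolynomial (Fin 2) ℚ)
        (MvPolynomial.X 1) =
      ∑ I : Finset α, if M.Indep ↑I then
          MvPolynomial.X 0 ^ (mrank M Finset.univ - mrank M I) *
            MvPolynomial.X 1 ^ (mexSet M ↑I).ncard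
        else 0 := by
  classical
  choose G hG using mgood_exists M hE
  set x : MvPolynomial (Fin 2) ℚ := MvPolynomial.X 0 with hx
  set y : MvPolynomial (Fin 2) ℚ := MvPolynomial.X 1 with hy
  set exF : Finset α → Finset α :=
    fun I => (Set.toFinite (mexSet M (↑I : Set α))).toFinset with hexF
  have hmemexF : ∀ (I : Finset α) (e : α), e ∈ exF I ↔ e ∈ mexSet M ↑I :=
    fun I e => Set.Finite.mem_toFinset _
  have hncard : ∀ I : Finset α, (mexSet M (↑I : Set α)).ncard = (exF I).card :=
    fun I => Set.ncard_eq_toFinset_card _ _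
  set P : Finset α → Finset (Finset α) :=
    fun I => if M.Indep ↑I then (exF I).powerset else ∅ with hP
  have key : ∀ I A : Finset α, M.Indep ↑I → A ⊆ exF I → MGood M I (I ∪ A) := by
    intro I A hI hA
    refine ⟨Finset.subset_union_left, hI, ?_⟩
    intro e he heI
    rcases Finset.mem_union.1 he with h | h
    · exact absurd h heI
    · exact (hmemexF I e).1 (hA h)
  have hdisj : ∀ I A : Finset α, M.Indep ↑I → A ⊆ exF I → Disjoint I A := by
    intro I A hI hA
    rw [Finset.disjoint_right]
    intro e he
    have := not_mem_of_mexSet M hE hI ((hmemexF I e).1 (hA he))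
    exact fun h => this (by exact_mod_cast h)
  have hRHS : (∑ I : Finset α, if M.Indep ↑I then
        x ^ (mrank M Finset.univ - mrank M I) * y ^ (mexSet M (↑I : Set α)).ncard else 0)
      = ∑ I : Finset α, ∑ A ∈ P I,
          x ^ (mrank M Finset.univ - mrank M I) * (y - 1) ^ A.card := by
    refine Finset.sum_congr rfl (fun I _ => ?_)
    by_cases hI : M.Indep ↑I
    · rw [if_pos hI]
      simp only [hP, if_pos hI]
      rw [← Finset.mul_sum, sum_pow_powerset, hncard]
      have : y - 1 + 1 = y := by ring
      rw [this]
    · rw [if_neg hI]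
      simp only [hP, if_neg hI, Finset.sum_empty]
  rw [hRHS, Finset.sum_sigma']
  simp only [tutteEval]
  have hxsimp : (1 + x) - 1 = x := by ring
  refine Finset.sum_nbij'
    (fun S => (⟨G S, S \ G S⟩ : Σ _ : Finset α, Finset α))
    (fun p => p.1 ∪ p.2) ?_ ?_ ?_ ?_ ?_
  · intro S _
    rw [Finset.mem_sigma]
    refine ⟨Finset.mem_univ _, ?_⟩
    simp only [hP, if_pos (hG S).2.1, Finset.mem_powerset]
    intro e he
    rw [Finset.mem_sdiff] at he
    exact (hmemexF _ _).2 ((hG S).2.2 e he.1 he.2)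
  · intro p _
    exact Finset.mem_univ _
  · intro S _
    exact Finset.union_sdiff_of_subset (hG S).1
  · rintro ⟨I, A⟩ hp
    rw [Finset.mem_sigma] at hp
    have hA := hp.2
    by_cases hI : M.Indep ↑I
    · simp only [hP, if_pos hI, Finset.mem_powerset] at hA
      have h1 : G (I ∪ A) = I := mgood_unique M hE (hG _) (key I A hI hA)
      have h2 : (I ∪ A) \ I = A := Finset.union_sdiff_cancel_left (hdisj I A hI hA)
      simp only [h1, h2]
    · simp only [hP, if_neg hI, Finset.notMem_empty] at hA
  · intro S _
    have hbasis := mgood_basis M hE (hG S)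
    have h1 : mrank M S = (G S).card := mrank_basis M hE hbasis
    have h2 : mrank M (G S) = (G S).card := mrank_indep M hE (hG S).2.1
    have h3 : (S \ G S).card = S.card - (G S).card := Finset.card_sdiff_of_subset (hG S).1
    rw [hxsimp, h1, h2, h3]
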